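/- The function t ↦ μ ln(1 + e^{t/μ}) (for μ > 0) is a smoothing function of t ↦ max{t, 0}: it is convex, continuously differentiable, satisfies 0 ≤ μ ln(1 + e^{t/μ}) - max{t,0} ≤ μ ln 2, and its derivative is Lipschitz continuous with constant 1/(4μ). -/

import Mathlib

theorem neural_network_smoothing (μ : ℝ) (hμ : 0 < μ) :
    ConvexOn ℝ Set.univ (fun t : ℝ => μ * Real.log (1 + Real.exp (t / μ))) ∧
    ContDiff ℝ 1 (fun t : ℝ => μ * Real.log (1 + Real.exp (t / μ))) ∧
    (∀ t : ℝ, 0 ≤ μ * Real.log (1 + Real.exp (t / μ)) - max t 0 ∧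
      μ * Real.log (1 + Real.exp (t / μ)) - max t 0 ≤ μ * Real.log 2) ∧
    LipschitzWith (Real.toNNReal (1 / (4 * μ)))
      (deriv (fun t : ℝ => μ * Real.log (1 + Real.exp (t / μ)))) := by
  have hμ' : μ ≠ 0 := hμ.ne'
  have hpos : ∀ t : ℝ, (0:ℝ) < 1 + Real.exp (t / μ) := fun t => by positivity
  -- derivative of f
  have hd : ∀ t : ℝ, HasDerivAt (fun t : ℝ => μ * Real.log (1 + Real.exp (t / μ)))
      (Real.exp (t / μ) / (1 + Real.exp (t / μ))) t := by
    intro t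
    have h1 : HasDerivAt (fun s : ℝ => s / μ) (1 / μ) t := (hasDerivAt_id t).div_const μ
    have h2 := h1.exp
    have h3 := h2.const_add 1
    have h4 := h3.log (hpos t).ne'
    have h5 := h4.const_mul μ
    refine h5.congr_deriv ?_
    field_simp
  have hderiv : deriv (fun t : ℝ => μ * Real.log (1 + Real.exp (t / μ)))
      = fun t : ℝ => Real.exp (t / μ) / (1 + Real.exp (t / μ)) :=
    funext fun t => (hd t).deriv
  -- derivative of the derivative
  have hd2 : ∀ t : ℝ, HasDerivAt (fun s : ℝ => Real.exp (s / μ) / (1 + Real.exp (s / μ)))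
      (Real.exp (t / μ) / (μ * (1 + Real.exp (t / μ)) ^ 2)) t := by
    intro t
    have h1 : HasDerivAt (fun s : ℝ => s / μ) (1 / μ) t := (hasDerivAt_id t).div_const μ
    have h2 := h1.exp
    have h3 := h2.const_add 1
    have h5 := h2.div h3 (hpos t).ne'
    refine h5.congr_deriv ?_
    field_simp
    ring
  refine ⟨?_, ?_, ?_, ?_⟩
  · -- convexity
    have hdiff : Differentiable ℝ (fun t : ℝ => μ * Real.log (1 + Real.exp (t / μ))) :=
      fun t => (hd t).differentiableAt
    refine Monotone.convexOn_univ_of_deriv hdiff ?_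
    rw [hderiv]
    intro a b hab
    have ha := Real.exp_pos (a / μ)
    have hb := Real.exp_pos (b / μ)
    rw [div_le_div_iff₀ (hpos a) (hpos b)]
    have : Real.exp (a / μ) ≤ Real.exp (b / μ) :=
      Real.exp_le_exp.2 (by gcongr)
    nlinarith
  · -- C¹
    have : ContDiff ℝ 1 (fun t : ℝ => Real.log (1 + Real.exp (t / μ))) :=
      ContDiff.log (contDiff_const.add ((contDiff_id.div_const μ).exp))
        (fun t => (hpos t).ne')
    exact contDiff_const.mul this
  · -- bounds
    intro t
    have h1 : t ≤ μ * Real.log (1 + Real.exp (t / μ)) := by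
      have : t / μ ≤ Real.log (1 + Real.exp (t / μ)) := by
        have h := Real.log_le_log (Real.exp_pos (t / μ))
          (show Real.exp (t / μ) ≤ 1 + Real.exp (t / μ) by linarith)
        rwa [Real.log_exp] at h
      calc t = μ * (t / μ) := by field_simp
        _ ≤ _ := by nlinarith
    have h2 : (0:ℝ) ≤ μ * Real.log (1 + Real.exp (t / μ)) := by
      have : (0:ℝ) ≤ Real.log (1 + Real.exp (t / μ)) :=
        Real.log_nonneg (by nlinarith [Real.exp_pos (t / μ)])
      positivity
    constructor
    · rcases le_total t 0 with h | h
      · rw [max_eq_right h]; linarith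
      · rw [max_eq_left h]; linarith
    · rcases le_total t 0 with h | h
      · rw [max_eq_right h]
        have he : Real.exp (t / μ) ≤ 1 := Real.exp_le_one_iff.2 (by
          exact div_nonpos_of_nonpos_of_nonneg h hμ.le)
        have : Real.log (1 + Real.exp (t / μ)) ≤ Real.log 2 :=
          Real.log_le_log (hpos t) (by linarith)
        nlinarith
      · rw [max_eq_left h]
        have he : (1:ℝ) ≤ Real.exp (t / μ) :=
          Real.one_le_exp (by positivity)
        have hlog : Real.log (1 + Real.exp (t / μ)) ≤ Real.log 2 + t / μ := by
          have : Real.log (1 + Real.exp (t / μ)) ≤ Real.log (2 * Real.exp (t / μ)) :=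
            Real.log_le_log (hpos t) (by linarith)
          rwa [Real.log_mul (by norm_num) (Real.exp_ne_zero _), Real.log_exp] at this
        calc μ * Real.log (1 + Real.exp (t / μ)) - t
            ≤ μ * (Real.log 2 + t / μ) - t := by nlinarith
          _ = μ * Real.log 2 := by field_simp; ring
  · -- Lipschitz derivative
    rw [hderiv]
    refine lipschitzWith_of_nnnorm_deriv_le (fun x => (hd2 x).differentiableAt) ?_
    intro x
    rw [(hd2 x).deriv, ← NNReal.coe_le_coe, coe_nnnorm, Real.norm_eq_abs,
      Real.coe_toNNReal _ (by positivity)]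
    have he := Real.exp_pos (x / μ)
    rw [abs_of_nonneg (by positivity), div_le_div_iff₀ (by positivity) (by positivity)]
    nlinarith [sq_nonneg (1 - Real.exp (x / μ))]
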